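/- For the Poisson structure g^(3), the Hamiltonian H = (1/2)⟨y,y⟩ + ⟨b,x⟩ (with b ∈ ℝ^3 constant) generates the equations of motion ẏ = b∧x, ẋ = y∧x + b∧z, ż = y∧z. That is, the Hamiltonian vector field of H, computed from the Lie–Poisson brackets, assigns to (y,x,z) the vector (b∧x, y∧x + b∧z, y∧z). -/

import Mathlib

open Matrix

noncomputable section

/-- Phase space of `g^(3)`: triples `(y, x, z)` of vectors in `ℝ³`. -/
abbrev G3 := (Fin 3 → ℝ) × (Fin 3 → ℝ) × (Fin 3 → ℝ)

/-- Gradient with respect to `y`. -/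
def gradY (f : G3 → ℝ) (p : G3) : Fin 3 → ℝ :=
  fun a => fderiv ℝ f p (Pi.single a 1, 0, 0)

/-- Gradient with respect to `x`. -/
def gradX (f : G3 → ℝ) (p : G3) : Fin 3 → ℝ :=
  fun a => fderiv ℝ f p (0, Pi.single a 1, 0)

/-- Gradient with respect to `z`. -/
def gradZ (f : G3 → ℝ) (p : G3) : Fin 3 → ℝ :=
  fun a => fderiv ℝ f p (0, 0, Pi.single a 1)

/-- The Lie–Poisson bracket of `g^(3)`: the extension by the Leibniz rule of
`{y^α,y^β} = ε^{αβ}_γ y^γ`, `{y^α,x^β} = ε^{αβ}_γ x^γ`, `{y^α,z^β} = ε^{αβ}_γ z^γ`,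
`{x^α,x^β} = ε^{αβ}_γ z^γ`, `{x^α,z^β} = {z^α,z^β} = 0`, namely
`{f,g} = ⟨y, ∇_y f ∧ ∇_y g⟩ + ⟨x, ∇_y f ∧ ∇_x g + ∇_x f ∧ ∇_y g⟩
       + ⟨z, ∇_y f ∧ ∇_z g + ∇_z f ∧ ∇_y g⟩ + ⟨z, ∇_x f ∧ ∇_x g⟩`. -/
def pb3 (f g : G3 → ℝ) (p : G3) : ℝ :=
  p.1 ⬝ᵥ ((gradY f p) ⨯₃ (gradY g p))
    + p.2.1 ⬝ᵥ ((gradY f p) ⨯₃ (gradX g p) + (gradX f p) ⨯₃ (gradY g p))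
    + p.2.2 ⬝ᵥ ((gradY f p) ⨯₃ (gradZ g p) + (gradZ f p) ⨯₃ (gradY g p))
    + p.2.2 ⬝ᵥ ((gradX f p) ⨯₃ (gradX g p))

/-!
The derivative of each coordinate function, and of `H`, at `p` is a functional
`q ↦ ⟨u, y⟩ + ⟨v, x⟩ + ⟨w, z⟩`, whose partial gradients are `(u, v, w)`; for `H` they are
`(y, b, 0)`. Substituted into the bracket, the term `⟨y, ∇_y f ∧ y⟩` vanishes and every
remaining term is a triple product, which the cyclic symmetry of `⟨·, · ∧ ·⟩` turns into a
component of the claimed cross products.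
-/

def dotG3 (u v w : Fin 3 → ℝ) : G3 →L[ℝ] ℝ :=
  LinearMap.toContinuousLinearMap
    { toFun q := u ⬝ᵥ q.1 + v ⬝ᵥ q.2.1 + w ⬝ᵥ q.2.2
      map_add' q q' := by simp only [Prod.fst_add, Prod.snd_add, dotProduct_add]; ring
      map_smul' c q := by
        simp only [Prod.smul_fst, Prod.smul_snd, dotProduct_smul, smul_eq_mul, RingHom.id_apply]
        ring }

@[simp]
lemma dotG3_apply (u v w : Fin 3 → ℝ) (q : G3) :
    dotG3 u v w q = u ⬝ᵥ q.1 + v ⬝ᵥ q.2.1 + w ⬝ᵥ q.2.2 := rfl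

section Gradients

variable {f : G3 → ℝ} {p : G3} {u v w : Fin 3 → ℝ}

lemma hasFDerivAt_of_eq_dotG3 (h : ∀ q, f q = dotG3 u v w q) : HasFDerivAt f (dotG3 u v w) p :=
  funext h ▸ (dotG3 u v w).hasFDerivAt

lemma gradY_of_hasFDerivAt (hf : HasFDerivAt f (dotG3 u v w) p) : gradY f p = u := by
  funext a
  simp [gradY, hf.fderiv]

lemma gradX_of_hasFDerivAt (hf : HasFDerivAt f (dotG3 u v w) p) : gradX f p = v := by
  funext a
  simp [gradX, hf.fderiv]

lemma gradZ_of_hasFDerivAt (hf : HasFDerivAt f (dotG3 u v w) p) : gradZ f p = w := by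
  funext a
  simp [gradZ, hf.fderiv]

end Gradients

lemma hasFDerivAt_coordY (p : G3) (a : Fin 3) :
    HasFDerivAt (fun q : G3 => q.1 a) (dotG3 (Pi.single a 1) 0 0) p :=
  hasFDerivAt_of_eq_dotG3 fun q => by simp

lemma hasFDerivAt_coordX (p : G3) (a : Fin 3) :
    HasFDerivAt (fun q : G3 => q.2.1 a) (dotG3 0 (Pi.single a 1) 0) p :=
  hasFDerivAt_of_eq_dotG3 fun q => by simp

lemma hasFDerivAt_coordZ (p : G3) (a : Fin 3) :
    HasFDerivAt (fun q : G3 => q.2.2 a) (dotG3 0 0 (Pi.single a 1)) p :=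
  hasFDerivAt_of_eq_dotG3 fun q => by simp

def hamiltonian (b : Fin 3 → ℝ) (q : G3) : ℝ := (1 / 2) * (q.1 ⬝ᵥ q.1) + b ⬝ᵥ q.2.1

lemma hasFDerivAt_hamiltonian (b : Fin 3 → ℝ) (p : G3) :
    HasFDerivAt (hamiltonian b) (dotG3 p.1 b 0) p := by
  have hsq : HasFDerivAt (fun q : G3 => q.1 ⬝ᵥ q.1)
      (∑ i, (2 * p.1 i) • dotG3 (Pi.single i 1) 0 0) p :=
    HasFDerivAt.fun_sum fun i _ => by
      simpa [two_mul, add_smul] using (hasFDerivAt_coordY p i).fun_mul (hasFDerivAt_coordY p i)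
  have hlin : HasFDerivAt (fun q : G3 => b ⬝ᵥ q.2.1) (dotG3 0 b 0) p :=
    hasFDerivAt_of_eq_dotG3 fun q => by simp
  refine ((hsq.const_mul (1 / 2)).add hlin).congr_fderiv (ContinuousLinearMap.ext fun q => ?_)
  simp [dotProduct, Finset.mul_sum, Pi.single_apply]
  exact Finset.sum_congr rfl fun i _ => by ring

lemma pb3_hamiltonian {f : G3 → ℝ} {u v w : Fin 3 → ℝ} (b : Fin 3 → ℝ) (p : G3)
    (hf : HasFDerivAt f (dotG3 u v w) p) :
    pb3 f (hamiltonian b) p = p.2.1 ⬝ᵥ (u ⨯₃ b + v ⨯₃ p.1) + p.2.2 ⬝ᵥ (w ⨯₃ p.1 + v ⨯₃ b) := by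
  have hH := hasFDerivAt_hamiltonian b p
  rw [pb3, gradY_of_hasFDerivAt hf, gradX_of_hasFDerivAt hf, gradZ_of_hasFDerivAt hf,
    gradY_of_hasFDerivAt hH, gradX_of_hasFDerivAt hH, gradZ_of_hasFDerivAt hH, dot_cross_self,
    map_zero, zero_add, zero_add]
  simp only [dotProduct_add]
  ring

lemma cross_apply_eq_dotProduct (v w : Fin 3 → ℝ) (a : Fin 3) :
    (v ⨯₃ w) a = w ⬝ᵥ (Pi.single a 1 ⨯₃ v) := by
  rw [← single_one_dotProduct a (v ⨯₃ w), triple_product_permutation, triple_product_permutation]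

/-- The Hamiltonian `H = ½⟨y,y⟩ + ⟨b,x⟩` generates, via the Lie–Poisson bracket of
`g^(3)`, the equations of motion `ẏ = b∧x`, `ẋ = y∧x + b∧z`, `ż = y∧z`: the
Hamiltonian vector field `f ↦ {f, H}` assigns to `(y,x,z)` the vector
`(b∧x, y∧x + b∧z, y∧z)`. -/
theorem stmt4 (b : Fin 3 → ℝ) (p : G3) (a : Fin 3) :
    pb3 (fun q => q.1 a) (fun q => (1 / 2) * (q.1 ⬝ᵥ q.1) + b ⬝ᵥ q.2.1) p
        = (b ⨯₃ p.2.1) a ∧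
    pb3 (fun q => q.2.1 a) (fun q => (1 / 2) * (q.1 ⬝ᵥ q.1) + b ⬝ᵥ q.2.1) p
        = (p.1 ⨯₃ p.2.1 + b ⨯₃ p.2.2) a ∧
    pb3 (fun q => q.2.2 a) (fun q => (1 / 2) * (q.1 ⬝ᵥ q.1) + b ⬝ᵥ q.2.1) p
        = (p.1 ⨯₃ p.2.2) a := by
  refine ⟨?_, ?_, ?_⟩
  · refine (pb3_hamiltonian b p (hasFDerivAt_coordY p a)).trans ?_
    simp [cross_apply_eq_dotProduct]
  · refine (pb3_hamiltonian b p (hasFDerivAt_coordX p a)).trans ?_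
    simp [cross_apply_eq_dotProduct]
  · refine (pb3_hamiltonian b p (hasFDerivAt_coordZ p a)).trans ?_
    simp [cross_apply_eq_dotProduct]
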